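/- Let ℋ be a complex Hilbert space with Hilbert (orthonormal) basis (f_j)_{j∈ℕ} and let ε : ℕ → ℝ be a function whose range is {E_n : n ∈ ℕ}, where E_1 < E_2 < ⋯ is a strictly increasing sequence of reals with lim_{n→∞} E_n = ∞, and such that each fiber ε^{-1}({E_n}) is finite. Let H be the diagonal operator with domain D(H) = {φ ∈ ℋ : ∑_j ε(j)² |⟨f_j,φ⟩|² < ∞} acting by Hφ = ∑_j ε(j) ⟨f_j,φ⟩ f_j. Then there exist a linear map T : 𝓕 → ℋ on 𝓕 := span{f_j : j ∈ ℕ} with ⟨Tφ,ψ⟩ = ⟨φ,Tψ⟩ for all φ,ψ ∈ 𝓕, and a dense subspace ℰ ⊆ 𝓕 such that for every ψ ∈ ℰ: Tψ ∈ D(H), Hψ ∈ 𝓕, and H(Tψ) − T(Hψ) = −iψ. -/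

import Mathlib

open scoped InnerProductSpace

/-- The action of the diagonal operator `diag(λ)`: `φ ↦ ∑_j λ_j ⟨f_j, φ⟩ f_j`. -/
noncomputable def diagOp {ℋ : Type*} [NormedAddCommGroup ℋ] [InnerProductSpace ℂ ℋ]
    (f : HilbertBasis ℕ ℂ ℋ) (lam : ℕ → ℝ) (φ : ℋ) : ℋ :=
  ∑' j : ℕ, ((lam j : ℂ) * ⟪f j, φ⟫_ℂ) • f j

/-- The domain `{φ : ∑_j λ_j² |⟨f_j, φ⟩|² < ∞}` of the diagonal operator `diag(λ)`. -/
def diagDom {ℋ : Type*} [NormedAddCommGroup ℋ] [InnerProductSpace ℂ ℋ]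
    (f : HilbertBasis ℕ ℂ ℋ) (lam : ℕ → ℝ) : Set ℋ :=
  {φ | Summable fun j : ℕ => (lam j) ^ 2 * ‖⟪f j, φ⟫_ℂ‖ ^ 2}

open Function
open scoped ENNReal

namespace TimeOp

/-- successor map on indices: jumps to an index with much larger eigenvalue, injectively -/
noncomputable def sig (ε : ℕ → ℝ) (hex : ∀ B : ℝ, ∃ j, B ≤ ε j) : ℕ → ℕ
  | 0 => Nat.find (hex (2 * |ε 0| + 1))
  | x + 1 => Nat.find (hex (max (2 * |ε (x + 1)| + 1) (ε (sig ε hex x) + 1)))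

theorem sig_grow (ε : ℕ → ℝ) (hex : ∀ B : ℝ, ∃ j, B ≤ ε j) (x : ℕ) :
    2 * |ε x| + 1 ≤ ε (sig ε hex x) := by
  cases x with
  | zero => exact Nat.find_spec (hex (2 * |ε 0| + 1))
  | succ n =>
      exact le_trans (le_max_left _ _) (Nat.find_spec (hex (max (2 * |ε (n + 1)| + 1) (ε (sig ε hex n) + 1))))

theorem sig_succ (ε : ℕ → ℝ) (hex : ∀ B : ℝ, ∃ j, B ≤ ε j) (x : ℕ) :
    ε (sig ε hex x) + 1 ≤ ε (sig ε hex (x + 1)) :=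
  le_trans (le_max_right _ _) (Nat.find_spec (hex (max (2 * |ε (x + 1)| + 1) (ε (sig ε hex x) + 1))))

theorem sig_inj (ε : ℕ → ℝ) (hex : ∀ B : ℝ, ∃ j, B ≤ ε j) :
    Function.Injective (sig ε hex) := by
  have hmono : StrictMono (fun x => ε (sig ε hex x)) :=
    strictMono_nat_of_lt_succ (fun n => lt_of_lt_of_le (by linarith) (sig_succ ε hex n))
  intro a b hab
  exact hmono.injective (by rw [hab])


variable {ε : ℕ → ℝ} {σ : ℕ → ℕ}

/-- iterated growth : ε(σ^[m+1] a) + 1 ≥ 2^(m+1) (|ε a| + 1) -/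
theorem grow_iter (hg : ∀ x, 2 * |ε x| + 1 ≤ ε (σ x)) (a m : ℕ) :
    2 ^ (m + 1) * (|ε a| + 1) ≤ ε (σ^[m + 1] a) + 1 := by
  induction m with
  | zero =>
      simpa using by linarith [hg a]
  | succ m ih =>
      have h1 : σ^[m + 1 + 1] a = σ (σ^[m + 1] a) := Function.iterate_succ_apply' σ (m + 1) a
      have h2 := hg (σ^[m + 1] a)
      have h3 : ε (σ^[m + 1] a) ≤ |ε (σ^[m + 1] a)| := le_abs_self _
      rw [h1]
      have he : (2:ℝ) ^ (m + 1 + 1) * (|ε a| + 1) = 2 * (2 ^ (m+1) * (|ε a| + 1)) := by ring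
      rw [he]
      linarith

theorem two_le_pow (m : ℕ) : (2:ℝ) ≤ 2 ^ (m + 1) := by
  calc (2:ℝ) = 2 ^ 1 := by norm_num
  _ ≤ 2 ^ (m + 1) := by
    apply pow_le_pow_right₀ (by norm_num) (by omega)

/-- eigenvalue strictly increases along the orbit -/
theorem eps_lt_iter (hg : ∀ x, 2 * |ε x| + 1 ≤ ε (σ x)) (a m : ℕ) :
    ε a < ε (σ^[m + 1] a) := by
  have h := grow_iter hg a m
  have h2 := two_le_pow m
  nlinarith [abs_nonneg (ε a), le_abs_self (ε a)]

/-- gap along the orbit: ε(σ^[m+1] a) - ε a ≥ 2^m -/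
theorem eps_gap (hg : ∀ x, 2 * |ε x| + 1 ≤ ε (σ x)) (a m : ℕ) :
    ε a + 2 ^ m ≤ ε (σ^[m + 1] a) := by
  have h := grow_iter hg a m
  have h2 : (2:ℝ) ^ (m+1) = 2 * 2 ^ m := by ring
  have h4 : (1:ℝ) ≤ 2 ^ m := one_le_pow₀ (by norm_num)
  nlinarith [abs_nonneg (ε a), le_abs_self (ε a)]

/-- doubling : ε(σ^[m+1] a) ≥ 2 |ε a| + 1, any m -/
theorem eps_double (hg : ∀ x, 2 * |ε x| + 1 ≤ ε (σ x)) (a m : ℕ) :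
    2 * |ε a| + 1 ≤ ε (σ^[m + 1] a) := by
  have h := grow_iter hg a m
  have h2 := two_le_pow m
  nlinarith [abs_nonneg (ε a)]

theorem eps_pos_iter (hg : ∀ x, 2 * |ε x| + 1 ≤ ε (σ x)) (a m : ℕ) :
    1 ≤ ε (σ^[m + 1] a) := by
  have := eps_double hg a m
  have := abs_nonneg (ε a)
  linarith

/-- the orbit map is injective -/
theorem iter_inj (hg : ∀ x, 2 * |ε x| + 1 ≤ ε (σ x)) (a : ℕ) :
    Function.Injective (fun m => σ^[m] a) := by
  have key : ∀ m k : ℕ, ε (σ^[m] a) < ε (σ^[m + (k+1)] a) := by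
    intro m k
    have he : σ^[m + (k+1)] a = σ^[k+1] (σ^[m] a) := by
      rw [add_comm]; exact Function.iterate_add_apply σ (k+1) m a
    rw [he]
    exact eps_lt_iter hg (σ^[m] a) k
  intro m m' h
  simp only at h
  rcases lt_trichotomy m m' with hlt | heq | hgt
  · obtain ⟨k, rfl⟩ : ∃ k, m' = m + (k+1) := ⟨m' - m - 1, by omega⟩
    exact absurd (key m k) (by rw [h]; exact lt_irrefl _)
  · exact heq
  · obtain ⟨k, rfl⟩ : ∃ k, m = m' + (k+1) := ⟨m - m' - 1, by omega⟩
    exact absurd (key m' k) (by rw [← h]; exact lt_irrefl _)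


/-- two indices lie on a common σ-orbit -/
def rel (σ : ℕ → ℕ) (j k : ℕ) : Prop := ∃ m, σ^[m] j = k ∨ σ^[m] k = j

theorem rel_refl (σ : ℕ → ℕ) (j : ℕ) : rel σ j j := ⟨0, Or.inl rfl⟩

theorem rel_symm {j k : ℕ} (h : rel σ j k) : rel σ k j := by
  obtain ⟨m, h | h⟩ := h
  exacts [⟨m, Or.inr h⟩, ⟨m, Or.inl h⟩]

theorem rel_sig (σ : ℕ → ℕ) (p : ℕ) : rel σ p (σ p) := ⟨1, Or.inl rfl⟩

/-- if j is related to σ p then j is related to p -/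
theorem rel_of_rel_sig (hinj : Function.Injective σ) {j p : ℕ} (h : rel σ j (σ p)) :
    rel σ j p := by
  obtain ⟨m, h | h⟩ := h
  · cases m with
    | zero => exact ⟨1, Or.inr h.symm⟩
    | succ m =>
        refine ⟨m, Or.inl ?_⟩
        have : σ (σ^[m] j) = σ p := by rw [← Function.iterate_succ_apply' σ m j]; exact h
        exact hinj this
  · exact ⟨m + 1, Or.inr (by rwa [Function.iterate_succ_apply σ m p])⟩

/-- if j is related to p, j ≠ p, then j related to σ p -/
theorem rel_sig_of_rel {j p : ℕ} (h : rel σ j p) (h1 : j ≠ p) : rel σ j (σ p) := by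
  obtain ⟨m, h | h⟩ := h
  · exact ⟨m + 1, Or.inl (by rw [Function.iterate_succ_apply' σ m j, h])⟩
  · cases m with
    | zero => exact absurd h.symm h1
    | succ m => exact ⟨m, Or.inr (by rwa [Function.iterate_succ_apply σ m p] at h)⟩

/-- related distinct indices have distinct eigenvalues -/
theorem eps_ne_of_rel (hg : ∀ x, 2 * |ε x| + 1 ≤ ε (σ x)) {j k : ℕ}
    (h : rel σ j k) (hne : j ≠ k) : ε j ≠ ε k := by
  obtain ⟨m, h | h⟩ := h
  · cases m with
    | zero => exact absurd h hne
    | succ m => rw [← h]; exact (ne_of_lt (eps_lt_iter hg j m))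
  · cases m with
    | zero => exact absurd h.symm hne
    | succ m => rw [← h]; exact (ne_of_lt (eps_lt_iter hg k m)).symm

open scoped Classical in
/-- the matrix of the time operator -/
noncomputable def tmat (ε : ℕ → ℝ) (σ : ℕ → ℕ) (j k : ℕ) : ℂ :=
  if rel σ j k ∧ j ≠ k then Complex.I / ((ε j : ℂ) - (ε k : ℂ)) else 0

theorem tmat_herm (hg : ∀ x, 2 * |ε x| + 1 ≤ ε (σ x)) (j k : ℕ) :
    tmat ε σ j k = starRingEnd ℂ (tmat ε σ k j) := by
  classical
  unfold tmat
  by_cases h : rel σ j k ∧ j ≠ k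
  · rw [if_pos h, if_pos ⟨rel_symm h.1, h.2.symm⟩]
    have hne : (ε k : ℝ) ≠ (ε j : ℝ) := (eps_ne_of_rel hg h.1 h.2).symm
    have hne' : ((ε k : ℂ) - (ε j : ℂ)) ≠ 0 := sub_ne_zero.2 (by exact_mod_cast hne)
    have hne'' : ((ε j : ℂ) - (ε k : ℂ)) ≠ 0 := sub_ne_zero.2 (by
      exact_mod_cast fun hh => hne (by exact_mod_cast hh.symm))
    rw [map_div₀, Complex.conj_I, map_sub, Complex.conj_ofReal, Complex.conj_ofReal]
    field_simp
    ring
  · rw [if_neg h, if_neg (fun hc => h ⟨rel_symm hc.1, hc.2.symm⟩), map_zero]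


theorem eps_lt_sig (hg : ∀ x, 2 * |ε x| + 1 ≤ ε (σ x)) (p : ℕ) : ε p < ε (σ p) := by
  simpa using eps_lt_iter hg p 0

theorem sig_ne (hg : ∀ x, 2 * |ε x| + 1 ≤ ε (σ x)) (p : ℕ) : p ≠ σ p :=
  fun h => absurd (eps_lt_sig hg p) (by rw [← h]; exact lt_irrefl _)

/-- the key pointwise commutation identity -/
theorem coord_identity (hg : ∀ x, 2 * |ε x| + 1 ≤ ε (σ x)) (hinj : Function.Injective σ)
    (p j : ℕ) :
    ((ε j : ℂ) - (ε p : ℂ)) * tmat ε σ j p - ((ε j : ℂ) - (ε (σ p) : ℂ)) * tmat ε σ j (σ p)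
      = -Complex.I * ((if j = p then 1 else 0) - (if j = σ p then 1 else 0)) := by
  classical
  have hpq : p ≠ σ p := sig_ne hg p
  have hcast : ∀ a b : ℕ, ε a ≠ ε b → ((ε a : ℂ) - (ε b : ℂ)) ≠ 0 := by
    intro a b hab
    rw [sub_ne_zero]
    exact_mod_cast hab
  by_cases hjp : j = p
  · subst hjp
    rw [if_pos rfl, if_neg hpq]
    have h1 : tmat ε σ j j = 0 := by unfold tmat; rw [if_neg (by simp)]
    have h2 : tmat ε σ j (σ j) = Complex.I / ((ε j : ℂ) - (ε (σ j) : ℂ)) := by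
      unfold tmat
      rw [if_pos ⟨rel_sig σ j, sig_ne hg j⟩]
    rw [h1, h2]
    have hne := hcast j (σ j) (ne_of_lt (eps_lt_sig hg j))
    field_simp
    ring
  · by_cases hjq : j = σ p
    · subst hjq
      rw [if_neg hjp, if_pos rfl]
      have h1 : tmat ε σ (σ p) (σ p) = 0 := by unfold tmat; rw [if_neg (by simp)]
      have h2 : tmat ε σ (σ p) p = Complex.I / ((ε (σ p) : ℂ) - (ε p : ℂ)) := by
        unfold tmat
        rw [if_pos ⟨rel_symm (rel_sig σ p), fun h => hpq h.symm⟩]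
      rw [h1, h2]
      have hne := hcast (σ p) p (ne_of_gt (eps_lt_sig hg p))
      field_simp
      ring
    · rw [if_neg hjp, if_neg hjq]
      by_cases hrel : rel σ j p
      · have hrelq : rel σ j (σ p) := rel_sig_of_rel hrel hjp
        have h1 : tmat ε σ j p = Complex.I / ((ε j : ℂ) - (ε p : ℂ)) := by
          unfold tmat; rw [if_pos ⟨hrel, hjp⟩]
        have h2 : tmat ε σ j (σ p) = Complex.I / ((ε j : ℂ) - (ε (σ p) : ℂ)) := by
          unfold tmat; rw [if_pos ⟨hrelq, hjq⟩]
        rw [h1, h2]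
        have hne1 := hcast j p (eps_ne_of_rel hg hrel hjp)
        have hne2 := hcast j (σ p) (eps_ne_of_rel hg hrelq hjq)
        field_simp
        ring
      · have hrelq : ¬ rel σ j (σ p) := fun h => hrel (rel_of_rel_sig hinj h)
        have h1 : tmat ε σ j p = 0 := by unfold tmat; rw [if_neg (fun h => hrel h.1)]
        have h2 : tmat ε σ j (σ p) = 0 := by unfold tmat; rw [if_neg (fun h => hrelq h.1)]
        rw [h1, h2]
        ring


/-- generic summability criterion: finite part + geometrically decaying tail -/
theorem summable_aux {φ : ℕ → ℝ} (hnn : ∀ j, 0 ≤ φ j) {A : Set ℕ} (hA : A.Finite)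
    {e : ℕ → ℕ} (he : Function.Injective e)
    (hsupp : ∀ j, j ∉ A → j ∉ Set.range e → φ j = 0)
    {C : ℝ} (hb : ∀ m, φ (e m) ≤ C * (1/2) ^ m) : Summable φ := by
  classical
  have h1 : Summable (A.indicator φ) := by
    apply summable_of_ne_finset_zero (s := hA.toFinset)
    intro b hbmem
    exact Set.indicator_of_notMem (fun hc => hbmem (hA.mem_toFinset.2 hc)) φ
  have h2 : Summable ((Set.range e).indicator φ) := by
    have hvan : ∀ x ∉ Set.range e, (Set.range e).indicator φ x = 0 := by
      intro x hx; exact Set.indicator_of_notMem hx φ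
    have hgeo : Summable (fun m : ℕ => C * (1/2) ^ m) := summable_geometric_two.mul_left C
    have heq : ∀ m, ((Set.range e).indicator φ ∘ e) m = φ (e m) := by
      intro m
      simp only [Function.comp_apply]
      exact Set.indicator_of_mem (Set.mem_range_self m) φ
    exact (he.summable_iff hvan).1 (Summable.of_nonneg_of_le
      (fun m => by rw [heq]; exact hnn _) (fun m => by rw [heq]; exact hb m) hgeo)
  have hle : ∀ j, φ j ≤ A.indicator φ j + (Set.range e).indicator φ j := by
    intro j
    have nn1 : 0 ≤ A.indicator φ j := Set.indicator_nonneg (fun x _ => hnn x) j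
    have nn2 : 0 ≤ (Set.range e).indicator φ j := Set.indicator_nonneg (fun x _ => hnn x) j
    by_cases hjA : j ∈ A
    · rw [Set.indicator_of_mem hjA]; linarith
    · by_cases hjr : j ∈ Set.range e
      · rw [Set.indicator_of_mem hjr]; linarith
      · rw [hsupp j hjA hjr]; linarith
  exact Summable.of_nonneg_of_le hnn hle (h1.add h2)

/-- ancestors (including the point itself) form a finite set -/
theorem anc_finite (hg : ∀ x, 2 * |ε x| + 1 ≤ ε (σ x))
    (hfin : ∀ B : ℝ, {j | ε j ≤ B}.Finite) (a : ℕ) :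
    {j | ∃ m, σ^[m] j = a}.Finite := by
  apply (hfin (ε a)).subset
  rintro j ⟨m, hm⟩
  cases m with
  | zero => simp only [Function.iterate_zero, id_eq] at hm; subst hm; exact Set.mem_setOf.2 le_rfl
  | succ m =>
      have := eps_lt_iter hg j m
      rw [hm] at this
      exact le_of_lt this


theorem norm_I_div (x : ℝ) : ‖Complex.I / (x : ℂ)‖ = 1 / |x| := by
  rw [norm_div, Complex.norm_I, Complex.norm_real, Real.norm_eq_abs]

theorem norm_I_div_sub (x y : ℝ) (hx : x ≠ 0) (hy : y ≠ 0) :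
    ‖Complex.I / (x : ℂ) - Complex.I / (y : ℂ)‖ = |y - x| / (|x| * |y|) := by
  have hx' : (x : ℂ) ≠ 0 := Complex.ofReal_ne_zero.2 hx
  have hy' : (y : ℂ) ≠ 0 := Complex.ofReal_ne_zero.2 hy
  have : Complex.I / (x : ℂ) - Complex.I / (y : ℂ) = Complex.I * ((((y - x) : ℝ) : ℂ) / ((x:ℂ) * (y:ℂ))) := by
    push_cast
    field_simp
  rw [this, norm_mul, Complex.norm_I, one_mul, norm_div, Complex.norm_real, Real.norm_eq_abs,
    norm_mul, Complex.norm_real, Complex.norm_real, Real.norm_eq_abs, Real.norm_eq_abs]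

/-- the columns of tmat are square–summable -/
theorem summable_col (hg : ∀ x, 2 * |ε x| + 1 ≤ ε (σ x)) (hinj : Function.Injective σ)
    (hfin : ∀ B : ℝ, {j | ε j ≤ B}.Finite) (a : ℕ) :
    Summable (fun j => ‖tmat ε σ j a‖ ^ 2) := by
  classical
  apply summable_aux (φ := fun j => ‖tmat ε σ j a‖ ^ 2)
    (fun j => by positivity) (anc_finite hg hfin a)
    (e := fun m => σ^[m + 1] a)
    (by
      intro m m' h
      have h2 : (fun n => σ^[n] a) (m+1) = (fun n => σ^[n] a) (m'+1) := h
      have := iter_inj hg a h2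
      omega) ?_ (C := 1)
  · -- bound on the tail
    intro m
    have hrel : rel σ (σ^[m+1] a) a := ⟨m + 1, Or.inr rfl⟩
    have hlt : ε a < ε (σ^[m+1] a) := eps_lt_iter hg a m
    have hne : σ^[m+1] a ≠ a := fun h => absurd hlt (by rw [h]; exact lt_irrefl _)
    have hval : tmat ε σ (σ^[m+1] a) a = Complex.I / (((ε (σ^[m+1] a) - ε a : ℝ)) : ℂ) := by
      unfold tmat
      rw [if_pos ⟨hrel, hne⟩]
      push_cast
      ring_nf
    have hgap : (2:ℝ) ^ m ≤ ε (σ^[m+1] a) - ε a := by linarith [eps_gap hg a m]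
    have hpos : (0:ℝ) < ε (σ^[m+1] a) - ε a := by
      have : (0:ℝ) < 2 ^ m := by positivity
      linarith
    rw [hval, norm_I_div, abs_of_pos hpos]
    rw [div_pow, one_pow, one_mul]
    have h1 : ((2:ℝ) ^ m) ^ 2 ≤ (ε (σ^[m+1] a) - ε a) ^ 2 :=
      pow_le_pow_left₀ (by positivity) hgap 2
    have h2 : (0:ℝ) < ((2:ℝ) ^ m) ^ 2 := by positivity
    calc 1 / (ε (σ^[m+1] a) - ε a) ^ 2 ≤ 1 / ((2:ℝ)^m)^2 := by
          apply one_div_le_one_div_of_le h2 h1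
    _ ≤ (1/2) ^ m := by
          rw [div_pow, one_pow]
          rw [← pow_mul]
          apply one_div_le_one_div_of_le (by positivity)
          apply pow_le_pow_right₀ (by norm_num) (by omega)
  · -- support
    intro j hjA hjr
    have hzero : tmat ε σ j a = 0 := by
      unfold tmat
      rw [if_neg]
      rintro ⟨⟨m, hm | hm⟩, hne⟩
      · exact hjA ⟨m, hm⟩
      · cases m with
        | zero => exact hne (by simpa using hm.symm)
        | succ m => exact hjr ⟨m, hm⟩
    show ‖tmat ε σ j a‖ ^ 2 = 0
    rw [hzero, norm_zero]
    ring


/-- the coefficients of H(T v_p) are square-summable -/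
theorem summable_Tv (hg : ∀ x, 2 * |ε x| + 1 ≤ ε (σ x)) (hinj : Function.Injective σ)
    (hfin : ∀ B : ℝ, {j | ε j ≤ B}.Finite) (p : ℕ) :
    Summable (fun j => (ε j) ^ 2 * ‖tmat ε σ j p - tmat ε σ j (σ p)‖ ^ 2) := by
  classical
  set q := σ p with hq
  apply summable_aux (φ := fun j => (ε j) ^ 2 * ‖tmat ε σ j p - tmat ε σ j q‖ ^ 2)
    (fun j => by positivity) (anc_finite hg hfin q)
    (e := fun m => σ^[m + 1] q)
    (by
      intro m m' h
      have h2 : (fun n => σ^[n] q) (m+1) = (fun n => σ^[n] q) (m'+1) := h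
      have := iter_inj hg q h2
      omega) ?_ (C := (ε q - ε p) ^ 2)
  · -- bound on the tail
    intro m
    set j := σ^[m+1] q with hjdef
    have hiter : σ^[m+2] p = j := by
      rw [hjdef, hq, ← Function.iterate_succ_apply σ (m+1) p]
    have hrelp : rel σ j p := ⟨m + 2, Or.inr hiter⟩
    have hrelq : rel σ j q := ⟨m + 1, Or.inr rfl⟩
    have hltp : ε p < ε j := by rw [← hiter]; exact eps_lt_iter hg p (m+1)
    have hltq : ε q < ε j := eps_lt_iter hg q m
    have hnep : j ≠ p := fun h => absurd hltp (by rw [h]; exact lt_irrefl _)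
    have hneq : j ≠ q := fun h => absurd hltq (by rw [h]; exact lt_irrefl _)
    have hgapp : (2:ℝ) ^ (m+1) ≤ ε j - ε p := by
      have := eps_gap hg p (m+1)
      rw [hiter] at this
      linarith
    have hgapq : (2:ℝ) ^ m ≤ ε j - ε q := by linarith [eps_gap hg q m]
    have hdouble : 2 * |ε q| + 1 ≤ ε j := eps_double hg q m
    have hepsj : (1:ℝ) ≤ ε j := eps_pos_iter hg q m
    have habs : ε q ≤ |ε q| := le_abs_self _
    -- value of the matrix entries
    have hvp : tmat ε σ j p = Complex.I / (((ε j - ε p : ℝ)) : ℂ) := by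
      unfold tmat; rw [if_pos ⟨hrelp, hnep⟩]; push_cast; ring_nf
    have hvq : tmat ε σ j q = Complex.I / (((ε j - ε q : ℝ)) : ℂ) := by
      unfold tmat; rw [if_pos ⟨hrelq, hneq⟩]; push_cast; ring_nf
    have hxpos : (0:ℝ) < ε j - ε p := by
      have h0 : (0:ℝ) < 2^(m+1) := by positivity
      linarith
    have hypos : (0:ℝ) < ε j - ε q := by
      have h0 : (0:ℝ) < 2^m := by positivity
      linarith
    have hnorm : ‖tmat ε σ j p - tmat ε σ j q‖ = (ε q - ε p) / ((ε j - ε p) * (ε j - ε q)) := by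
      rw [hvp, hvq, norm_I_div_sub _ _ (ne_of_gt hxpos) (ne_of_gt hypos)]
      rw [abs_of_pos hxpos, abs_of_pos hypos,
        abs_of_neg (by linarith [eps_lt_sig hg p] : (ε j - ε q) - (ε j - ε p) < 0)]
      congr 1
      ring
    show (ε j) ^ 2 * ‖tmat ε σ j p - tmat ε σ j q‖ ^ 2 ≤ (ε q - ε p)^2 * (1/2) ^ m
    rw [hnorm]
    have hqp : (0:ℝ) < ε q - ε p := by linarith [eps_lt_sig hg p]
    have hhalf : ε j ≤ 2 * (ε j - ε q) := by linarith
    have e1 : (ε j) ^ 2 * ((ε q - ε p) / ((ε j - ε p) * (ε j - ε q))) ^ 2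
        = (ε q - ε p) ^ 2 * ((ε j / (ε j - ε q)) ^ 2 * (1 / (ε j - ε p)) ^ 2) := by
      field_simp
    rw [e1]
    have e2 : (ε j / (ε j - ε q)) ^ 2 ≤ 4 := by
      have h2 : ε j / (ε j - ε q) ≤ 2 := by
        rw [div_le_iff₀ hypos]; linarith
      have h0 : 0 ≤ ε j / (ε j - ε q) := div_nonneg (by linarith) (le_of_lt hypos)
      calc (ε j / (ε j - ε q)) ^ 2 ≤ 2 ^ 2 := pow_le_pow_left₀ h0 h2 2
      _ = 4 := by norm_num
    have e3 : (1 / (ε j - ε p)) ^ 2 ≤ ((1:ℝ)/2) ^ (2*m+2) := by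
      have h1 : 1 / (ε j - ε p) ≤ 1 / (2:ℝ) ^ (m+1) :=
        one_div_le_one_div_of_le (by positivity) hgapp
      have h0 : 0 ≤ 1 / (ε j - ε p) := by positivity
      calc (1 / (ε j - ε p)) ^ 2 ≤ (1 / (2:ℝ) ^ (m+1)) ^ 2 := pow_le_pow_left₀ h0 h1 2
      _ = ((1:ℝ)/2) ^ (2*m+2) := by
          rw [div_pow, one_pow, ← pow_mul, div_pow, one_pow]
          congr 1
          ring
    have e4 : (ε j / (ε j - ε q)) ^ 2 * (1 / (ε j - ε p)) ^ 2 ≤ 4 * ((1:ℝ)/2) ^ (2*m+2) := by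
      apply mul_le_mul e2 e3 (by positivity) (by norm_num)
    have e5 : (4:ℝ) * ((1:ℝ)/2) ^ (2*m+2) ≤ ((1:ℝ)/2) ^ m := by
      have : ((1:ℝ)/2) ^ (2*m+2) = ((1:ℝ)/2)^2 * ((1:ℝ)/2)^(2*m) := by
        rw [← pow_add]; congr 1; ring
      rw [this]
      have h6 : ((1:ℝ)/2) ^ (2*m) ≤ ((1:ℝ)/2) ^ m :=
        pow_le_pow_of_le_one (by norm_num) (by norm_num) (by omega)
      norm_num
      linarith
    apply mul_le_mul_of_nonneg_left (le_trans e4 e5) (by positivity)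
  · -- support
    intro j hjA hjr
    have hjq : j ≠ q := fun h => hjA (h ▸ ⟨0, rfl⟩)
    have hjp : j ≠ p := fun h => hjA (h ▸ ⟨1, rfl⟩)
    have hrelq : ¬ rel σ j q := by
      rintro ⟨m, hm | hm⟩
      · exact hjA ⟨m, hm⟩
      · cases m with
        | zero => exact hjq (by simpa using hm.symm)
        | succ m => exact hjr ⟨m, hm⟩
    have hrelp : ¬ rel σ j p := fun h => hrelq (rel_sig_of_rel h hjp)
    have h1 : tmat ε σ j p = 0 := by unfold tmat; rw [if_neg (fun h => hrelp h.1)]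
    have h2 : tmat ε σ j q = 0 := by unfold tmat; rw [if_neg (fun h => hrelq h.1)]
    show (ε j) ^ 2 * ‖tmat ε σ j p - tmat ε σ j q‖ ^ 2 = 0
    rw [h1, h2, sub_zero, norm_zero]
    ring


/-! ### Hilbert space layer -/

theorem memlp_two_iff {c : ℕ → ℂ} : Memℓp c 2 ↔ Summable (fun j => ‖c j‖ ^ 2) := by
  have h0 : (0:ℝ) < (2 : ℝ≥0∞).toReal := by norm_num
  rw [memℓp_gen_iff h0]
  exact summable_congr fun j => by
    have : ((2:ℝ≥0∞)).toReal = ((2:ℕ):ℝ) := by norm_num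
    rw [this, Real.rpow_natCast]


section Hilbert

variable {ℋ : Type*} [NormedAddCommGroup ℋ] [InnerProductSpace ℂ ℋ] [CompleteSpace ℋ]
variable (f : HilbertBasis ℕ ℂ ℋ)

noncomputable def vecOf (c : ℕ → ℂ) (h : Memℓp c 2) : ℋ := f.repr.symm ⟨c, h⟩

theorem inner_vecOf (c : ℕ → ℂ) (h : Memℓp c 2) (j : ℕ) : ⟪f j, vecOf f c h⟫_ℂ = c j := by
  rw [← f.repr_apply_apply, vecOf, LinearIsometryEquiv.apply_symm_apply]

theorem ext_inner {x y : ℋ} (h : ∀ j, ⟪f j, x⟫_ℂ = ⟪f j, y⟫_ℂ) : x = y := by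
  apply f.repr.injective
  apply lp.ext
  funext j
  rw [show ((f.repr x) : ∀ _ : ℕ, ℂ) j = f.repr x j from rfl,
    show ((f.repr y) : ∀ _ : ℕ, ℂ) j = f.repr y j from rfl,
    f.repr_apply_apply, f.repr_apply_apply]
  exact h j

theorem hasSum_of_memlp (c : ℕ → ℂ) (h : Memℓp c 2) :
    HasSum (fun j => c j • f j) (vecOf f c h) := by
  simpa [vecOf] using f.hasSum_repr_symm ⟨c, h⟩

variable (ε : ℕ → ℝ)

theorem diagOp_hasSum (x : ℋ) (h : Memℓp (fun j => (ε j : ℂ) * ⟪f j, x⟫_ℂ) 2) :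
    HasSum (fun j => ((ε j : ℂ) * ⟪f j, x⟫_ℂ) • f j) (diagOp f ε x) := by
  have hs := hasSum_of_memlp f _ h
  rw [diagOp, hs.tsum_eq]
  exact hs

theorem inner_diagOp (x : ℋ) (h : Memℓp (fun j => (ε j : ℂ) * ⟪f j, x⟫_ℂ) 2) (j : ℕ) :
    ⟪f j, diagOp f ε x⟫_ℂ = (ε j : ℂ) * ⟪f j, x⟫_ℂ := by
  have hs := hasSum_of_memlp f _ h
  rw [diagOp, hs.tsum_eq, inner_vecOf]

theorem inner_fs (d : ℕ →₀ ℂ) (j : ℕ) :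
    ⟪f j, d.sum (fun k z => z • f k)⟫_ℂ = d j := by
  classical
  rw [Finsupp.sum, inner_sum]
  have he : ∀ k ∈ d.support, ⟪f j, d k • f k⟫_ℂ = if k = j then d k else 0 := by
    intro k _
    rw [inner_smul_right]
    rcases eq_or_ne k j with h | h
    · subst h
      rw [if_pos rfl, orthonormal_iff_ite.1 f.orthonormal, if_pos rfl, mul_one]
    · rw [if_neg h, orthonormal_iff_ite.1 f.orthonormal, if_neg (fun hc => h (by rw [hc])), mul_zero]
  rw [Finset.sum_congr rfl he, Finset.sum_ite_eq' d.support j d]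
  by_cases hj : j ∈ d.support
  · rw [if_pos hj]
  · rw [if_neg hj, Finsupp.notMem_support_iff.1 hj]

/-- diagonal coefficients of a finitely supported vector are in ℓ² -/
theorem memlp_fs (d : ℕ →₀ ℂ) :
    Memℓp (fun j => (ε j : ℂ) * ⟪f j, d.sum (fun k z => z • f k)⟫_ℂ) 2 := by
  apply memlp_two_iff.2
  apply summable_of_ne_finset_zero (s := d.support)
  intro b hb
  rw [inner_fs, Finsupp.notMem_support_iff.1 hb, mul_zero, norm_zero]
  ring

theorem diagOp_fs (d : ℕ →₀ ℂ) :
    diagOp f ε (d.sum (fun k z => z • f k))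
      = ∑ k ∈ d.support, ((ε k : ℂ) * d k) • f k := by
  rw [diagOp]
  rw [tsum_eq_sum (s := d.support) (f := fun j => ((ε j : ℂ) * ⟪f j, d.sum (fun k z => z • f k)⟫_ℂ) • f j)]
  · exact Finset.sum_congr rfl (fun k _ => by rw [inner_fs])
  · intro b hb
    rw [inner_fs, Finsupp.notMem_support_iff.1 hb, mul_zero, zero_smul]

theorem diagOp_zero : diagOp f ε (0 : ℋ) = 0 := by
  rw [diagOp]
  have : (fun j => ((ε j : ℂ) * ⟪f j, (0:ℋ)⟫_ℂ) • f j) = fun _ => (0 : ℋ) := by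
    funext j
    rw [inner_zero_right, mul_zero, zero_smul]
  rw [this, tsum_zero]

theorem diagOp_add (x y : ℋ) (hx : Memℓp (fun j => (ε j : ℂ) * ⟪f j, x⟫_ℂ) 2)
    (hy : Memℓp (fun j => (ε j : ℂ) * ⟪f j, y⟫_ℂ) 2) :
    diagOp f ε (x + y) = diagOp f ε x + diagOp f ε y := by
  have h1 := diagOp_hasSum f ε x hx
  have h2 := diagOp_hasSum f ε y hy
  have hfe : (fun j => ((ε j : ℂ) * ⟪f j, x + y⟫_ℂ) • f j)
      = fun j => ((ε j : ℂ) * ⟪f j, x⟫_ℂ) • f j + ((ε j : ℂ) * ⟪f j, y⟫_ℂ) • f j := by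
    funext j
    rw [inner_add_right, mul_add, add_smul]
  rw [diagOp, hfe]
  exact (h1.add h2).tsum_eq

theorem diagOp_smul (c : ℂ) (x : ℋ) (hx : Memℓp (fun j => (ε j : ℂ) * ⟪f j, x⟫_ℂ) 2) :
    diagOp f ε (c • x) = c • diagOp f ε x := by
  have h1 := diagOp_hasSum f ε x hx
  have hfe : (fun j => ((ε j : ℂ) * ⟪f j, c • x⟫_ℂ) • f j)
      = fun j => c • (((ε j : ℂ) * ⟪f j, x⟫_ℂ) • f j) := by
    funext j
    rw [inner_smul_right, smul_smul, mul_left_comm]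
  rw [diagOp, hfe]
  exact (h1.const_smul c).tsum_eq

end Hilbert

theorem norm_mul_sq (r : ℝ) (z : ℂ) : ‖(r : ℂ) * z‖ ^ 2 = r ^ 2 * ‖z‖ ^ 2 := by
  rw [norm_mul, Complex.norm_real, Real.norm_eq_abs, mul_pow, sq_abs]

end TimeOp

open TimeOp

/-- existence of a time operator of `H = diag(ε(j))` when the eigenvalues
`ε(j)` run (with finite multiplicities) through a strictly increasing sequence
`E_1 < E_2 < ⋯ → ∞`; no growth condition such as `∑ 1/E_n² < ∞` is imposed. -/
theorem exists_time_operator_discrete_spectrum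
    {ℋ : Type*} [NormedAddCommGroup ℋ] [InnerProductSpace ℂ ℋ] [CompleteSpace ℋ]
    (f : HilbertBasis ℕ ℂ ℋ) (ε : ℕ → ℝ) (E : ℕ → ℝ)
    (hmono : StrictMono E)
    (hlim : Filter.Tendsto E Filter.atTop Filter.atTop)
    (hrange : Set.range ε = Set.range E)
    (hfib : ∀ n : ℕ, (ε ⁻¹' {E n}).Finite) :
    ∃ (T : ℋ →ₗ[ℂ] ℋ) (ℰ : Submodule ℂ ℋ),
      ℰ ≤ Submodule.span ℂ (Set.range f) ∧
      Dense (ℰ : Set ℋ) ∧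
      (∀ φ ∈ Submodule.span ℂ (Set.range f), ∀ ψ ∈ Submodule.span ℂ (Set.range f),
        ⟪T φ, ψ⟫_ℂ = ⟪φ, T ψ⟫_ℂ) ∧
      ∀ ψ ∈ ℰ,
        T ψ ∈ diagDom f ε ∧
        diagOp f ε ψ ∈ Submodule.span ℂ (Set.range f) ∧
        diagOp f ε (T ψ) - T (diagOp f ε ψ) = -Complex.I • ψ := by
  classical
  -- existence of arbitrarily large eigenvalues
  have hex : ∀ B : ℝ, ∃ j, B ≤ ε j := by
    intro B
    obtain ⟨n, hn⟩ := (hlim.eventually (Filter.eventually_ge_atTop B)).exists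
    obtain ⟨j, hj⟩ : E n ∈ Set.range ε := by rw [hrange]; exact ⟨n, rfl⟩
    exact ⟨j, by rw [hj]; exact hn⟩
  -- sublevel sets are finite
  have hfin : ∀ B : ℝ, {j | ε j ≤ B}.Finite := by
    intro B
    obtain ⟨N, hN⟩ := Filter.eventually_atTop.1 (hlim.eventually (Filter.eventually_gt_atTop B))
    apply Set.Finite.subset (Set.Finite.biUnion (Finset.range N).finite_toSet
      (fun n _ => hfib n))
    intro j hj
    obtain ⟨n, hn⟩ : ε j ∈ Set.range E := by rw [← hrange]; exact ⟨j, rfl⟩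
    have hnN : n < N := by
      by_contra h
      push_neg at h
      have := hN n h
      rw [hn] at this
      exact absurd hj (not_le.2 this)
    exact Set.mem_biUnion (by simpa using hnN) (by simp [Set.mem_preimage, hn.symm])
  set σ : ℕ → ℕ := TimeOp.sig ε hex with hσ
  have hg : ∀ x, 2 * |ε x| + 1 ≤ ε (σ x) := TimeOp.sig_grow ε hex
  have hinj : Function.Injective σ := TimeOp.sig_inj ε hex
  -- column vectors of the operator
  have hcol : ∀ a, Memℓp (fun j => tmat ε σ j a) 2 :=
    fun a => memlp_two_iff.2 (summable_col hg hinj hfin a)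
  set u : ℕ → ℋ := fun a => vecOf f (fun j => tmat ε σ j a) (hcol a) with hudef
  have hu : ∀ j a, ⟪f j, u a⟫_ℂ = tmat ε σ j a := fun j a => inner_vecOf f _ _ j
  -- the linear operator T
  have hli : LinearIndependent ℂ f := f.orthonormal.linearIndependent
  obtain ⟨Q, hQ⟩ := Submodule.exists_isCompl (Submodule.span ℂ (Set.range f))
  set T : ℋ →ₗ[ℂ] ℋ := ((Module.Basis.span hli).constr ℂ u).comp
    ((Submodule.span ℂ (Set.range f)).linearProjOfIsCompl Q hQ) with hTdef
  have hmemf : ∀ a : ℕ, f a ∈ Submodule.span ℂ (Set.range f) :=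
    fun a => Submodule.subset_span ⟨a, rfl⟩
  have hTf : ∀ a, T (f a) = u a := by
    intro a
    have h1 : (Submodule.span ℂ (Set.range f)).linearProjOfIsCompl Q hQ (f a)
        = ⟨f a, hmemf a⟩ := Submodule.linearProjOfIsCompl_apply_left hQ ⟨f a, hmemf a⟩
    have h2 : (⟨f a, hmemf a⟩ : Submodule.span ℂ (Set.range f)) = Module.Basis.span hli a :=
      (Module.Basis.span_apply hli a).symm
    show ((Module.Basis.span hli).constr ℂ u) ((Submodule.span ℂ (Set.range f)).linearProjOfIsCompl Q hQ (f a)) = u a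
    rw [h1, h2]
    exact (Module.Basis.span hli).constr_basis ℂ u a
  -- the dense commutation domain
  set ℰ : Submodule ℂ ℋ := Submodule.span ℂ (Set.range (fun p => f p - f (σ p))) with hℰ
  have hEle : ℰ ≤ Submodule.span ℂ (Set.range f) := by
    rw [hℰ, Submodule.span_le]
    rintro x ⟨p, rfl⟩
    exact sub_mem (hmemf p) (hmemf (σ p))
  have hdense : Dense (ℰ : Set ℋ) := by
    rw [Submodule.dense_iff_topologicalClosure_eq_top, Submodule.topologicalClosure_eq_top_iff,
      Submodule.eq_bot_iff]
    intro x hx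
    have horth : ∀ p, ⟪f p, x⟫_ℂ = ⟪f (σ p), x⟫_ℂ := by
      intro p
      have hmem : f p - f (σ p) ∈ ℰ := Submodule.subset_span ⟨p, rfl⟩
      have h0 := (Submodule.mem_orthogonal ℰ x).1 hx _ hmem
      rw [inner_sub_left, sub_eq_zero] at h0
      exact h0
    have hiter : ∀ p m, ⟪f p, x⟫_ℂ = ⟪f (σ^[m] p), x⟫_ℂ := by
      intro p m
      induction m with
      | zero => rfl
      | succ m ih =>
          rw [ih, Function.iterate_succ_apply' σ m p]
          exact horth (σ^[m] p)
    have hm : Memℓp (fun j => ⟪f j, x⟫_ℂ) 2 := by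
      have hlp := lp.memℓp (f.repr x)
      have he : (fun j => ⟪f j, x⟫_ℂ) = ⇑(f.repr x) := by
        funext j
        exact (f.repr_apply_apply x j).symm
      rwa [he]
    have hsum := memlp_two_iff.1 hm
    have hzero : ∀ p, ⟪f p, x⟫_ℂ = 0 := by
      intro p
      have hcomp : Summable ((fun j => ‖⟪f j, x⟫_ℂ‖^2) ∘ (fun m => σ^[m] p)) :=
        hsum.comp_injective (iter_inj hg p)
      have hconst : Summable (fun _ : ℕ => ‖⟪f p, x⟫_ℂ‖^2) := by
        apply hcomp.congr
        intro m
        simp only [Function.comp_apply]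
        rw [← hiter p m]
      have h0 : ‖⟪f p, x⟫_ℂ‖^2 = 0 :=
        tendsto_nhds_unique tendsto_const_nhds hconst.tendsto_atTop_zero
      have h1 : ‖⟪f p, x⟫_ℂ‖ = 0 := by
        nlinarith [norm_nonneg (⟪f p, x⟫_ℂ)]
      exact norm_eq_zero.1 h1
    exact ext_inner f (fun j => by rw [hzero j, inner_zero_right])
  -- symmetry of T on the span
  have hsymm : ∀ φ ∈ Submodule.span ℂ (Set.range f), ∀ ψ ∈ Submodule.span ℂ (Set.range f),
      ⟪T φ, ψ⟫_ℂ = ⟪φ, T ψ⟫_ℂ := by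
    intro φ hφ ψ hψ
    induction hφ, hψ using Submodule.span_induction₂ with
    | mem_mem a b ha hb =>
        obtain ⟨i, rfl⟩ := ha
        obtain ⟨j, rfl⟩ := hb
        rw [hTf i, hTf j, ← inner_conj_symm (u i) (f j), hu j i, hu i j]
        exact (tmat_herm hg i j).symm
    | zero_left y hy => simp
    | zero_right x hx => simp
    | add_left x y z hx hy hz h1 h2 => rw [map_add, inner_add_left, inner_add_left, h1, h2]
    | add_right x y z hx hy hz h1 h2 => rw [map_add, inner_add_right, inner_add_right, h1, h2]
    | smul_left r x y hx hy h => rw [map_smul, inner_smul_left, inner_smul_left, h]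
    | smul_right r x y hx hy h => rw [map_smul, inner_smul_right, inner_smul_right, h]
  refine ⟨T, ℰ, hEle, hdense, hsymm, ?_⟩
  -- diagonal coefficients of span elements and membership of diagOp
  have hmemlp_span : ∀ x, x ∈ Submodule.span ℂ (Set.range f) →
      Memℓp (fun j => (ε j : ℂ) * ⟪f j, x⟫_ℂ) 2 ∧
        diagOp f ε x ∈ Submodule.span ℂ (Set.range f) := by
    intro x hx
    obtain ⟨d, rfl⟩ := Finsupp.mem_span_range_iff_exists_finsupp.1 hx
    refine ⟨memlp_fs f ε d, ?_⟩
    rw [diagOp_fs f ε d]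
    exact Submodule.sum_mem _ (fun k _ => Submodule.smul_mem _ _ (hmemf k))
  have main : ∀ ψ, ψ ∈ ℰ →
      ψ ∈ Submodule.span ℂ (Set.range f) ∧
      Memℓp (fun j => (ε j : ℂ) * ⟪f j, T ψ⟫_ℂ) 2 ∧
      diagOp f ε (T ψ) - T (diagOp f ε ψ) = -Complex.I • ψ := by
    intro ψ hψ
    induction hψ using Submodule.span_induction with
    | mem v hv =>
        obtain ⟨p, rfl⟩ := hv
        have hpq : p ≠ σ p := sig_ne hg p
        have hTv : T (f p - f (σ p)) = u p - u (σ p) := by rw [map_sub, hTf, hTf]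
        have hcoef : ∀ j, ⟪f j, T (f p - f (σ p))⟫_ℂ = tmat ε σ j p - tmat ε σ j (σ p) := by
          intro j
          rw [hTv, inner_sub_right, hu, hu]
        have hlp : Memℓp (fun j => (ε j : ℂ) * ⟪f j, T (f p - f (σ p))⟫_ℂ) 2 := by
          apply memlp_two_iff.2
          apply (summable_Tv hg hinj hfin p).congr
          intro j
          rw [hcoef j, norm_mul_sq]
        have hv𝓕 : f p - f (σ p) ∈ Submodule.span ℂ (Set.range f) :=
          sub_mem (hmemf p) (hmemf (σ p))
        refine ⟨hv𝓕, hlp, ?_⟩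
        have hdv : diagOp f ε (f p - f (σ p)) = (ε p : ℂ) • f p - (ε (σ p) : ℂ) • f (σ p) := by
          rw [diagOp, tsum_eq_sum (s := ({p, σ p} : Finset ℕ))]
          · rw [Finset.sum_pair hpq]
            have h1 : ⟪f p, f p - f (σ p)⟫_ℂ = 1 := by
              rw [inner_sub_right, orthonormal_iff_ite.1 f.orthonormal,
                orthonormal_iff_ite.1 f.orthonormal, if_pos rfl, if_neg hpq]
              ring
            have h2 : ⟪f (σ p), f p - f (σ p)⟫_ℂ = -1 := by
              rw [inner_sub_right, orthonormal_iff_ite.1 f.orthonormal,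
                orthonormal_iff_ite.1 f.orthonormal, if_pos rfl, if_neg (fun h => hpq h.symm)]
              ring
            rw [h1, h2, mul_one, mul_neg_one, neg_smul, ← sub_eq_add_neg]
          · intro b hb
            have hbp : b ≠ p := fun h => hb (by simp [h])
            have hbq : b ≠ σ p := fun h => hb (by simp [h])
            have hz : ⟪f b, f p - f (σ p)⟫_ℂ = 0 := by
              rw [inner_sub_right, orthonormal_iff_ite.1 f.orthonormal,
                orthonormal_iff_ite.1 f.orthonormal, if_neg hbp, if_neg hbq]
              ring
            rw [hz, mul_zero, zero_smul]
        apply ext_inner f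
        intro j
        rw [inner_sub_right, inner_diagOp f ε (T (f p - f (σ p))) hlp j, hcoef j]
        rw [hdv, map_sub, map_smul, map_smul, hTf, hTf]
        rw [inner_sub_right, inner_smul_right, inner_smul_right, hu, hu]
        rw [inner_smul_right, inner_sub_right, orthonormal_iff_ite.1 f.orthonormal,
          orthonormal_iff_ite.1 f.orthonormal]
        linear_combination coord_identity hg hinj p j
    | zero =>
        refine ⟨Submodule.zero_mem _, ?_, ?_⟩
        · have he : (fun j => (ε j : ℂ) * ⟪f j, T 0⟫_ℂ) = (0 : ℕ → ℂ) := by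
            funext j
            rw [map_zero, inner_zero_right, mul_zero]
            rfl
          rw [he]
          exact zero_memℓp
        · simp only [map_zero, diagOp_zero, smul_zero, sub_zero]
    | add x y hx hy ihx ihy =>
        obtain ⟨hxF, hxl, hxe⟩ := ihx
        obtain ⟨hyF, hyl, hye⟩ := ihy
        refine ⟨add_mem hxF hyF, ?_, ?_⟩
        · have he : (fun j => (ε j : ℂ) * ⟪f j, T (x + y)⟫_ℂ)
              = (fun j => (ε j : ℂ) * ⟪f j, T x⟫_ℂ) + (fun j => (ε j : ℂ) * ⟪f j, T y⟫_ℂ) := by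
            funext j
            rw [map_add, inner_add_right, mul_add]
            rfl
          rw [he]
          exact hxl.add hyl
        · rw [map_add, diagOp_add f ε (T x) (T y) hxl hyl,
            diagOp_add f ε x y (hmemlp_span x hxF).1 (hmemlp_span y hyF).1,
            map_add, smul_add, ← hxe, ← hye]
          abel
    | smul c x hx ihx =>
        obtain ⟨hxF, hxl, hxe⟩ := ihx
        refine ⟨Submodule.smul_mem _ _ hxF, ?_, ?_⟩
        · have he : (fun j => (ε j : ℂ) * ⟪f j, T (c • x)⟫_ℂ)
              = c • (fun j => (ε j : ℂ) * ⟪f j, T x⟫_ℂ) := by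
            funext j
            rw [map_smul, inner_smul_right]
            show (ε j : ℂ) * (c * ⟪f j, T x⟫_ℂ) = c * ((ε j : ℂ) * ⟪f j, T x⟫_ℂ)
            ring
          rw [he]
          exact hxl.const_smul c
        · rw [map_smul, diagOp_smul f ε c (T x) hxl,
            diagOp_smul f ε c x (hmemlp_span x hxF).1, map_smul, ← smul_sub, hxe, smul_comm]
  intro ψ hψ
  obtain ⟨h1, h2, h3⟩ := main ψ hψ
  refine ⟨?_, (hmemlp_span ψ h1).2, h3⟩
  show Summable fun j : ℕ => (ε j) ^ 2 * ‖⟪f j, T ψ⟫_ℂ‖ ^ 2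
  apply (memlp_two_iff.1 h2).congr
  intro j
  rw [norm_mul_sq]
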